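/- For fixed k ≥ 1 and n ≥ 1, the sequence j ↦ S(k,j) · (n)_j for 1 ≤ j ≤ min(k,n) is logarithmically concave: (S(k,j)(n)_j)^2 ≥ S(k,j-1)(n)_{j-1} · S(k,j+1)(n)_{j+1} for 2 ≤ j ≤ min(k,n)-1. -/
import Mathlib


/-- Stirling numbers of the second kind. -/
def stirling2 : ℕ → ℕ → ℕ
  | 0, 0 => 1
  | 0, _ + 1 => 0
  | _ + 1, 0 => 0
  | k + 1, j + 1 => stirling2 k j + (j + 1) * stirling2 k (j + 1)

lemma stirling2_eq_zero : ∀ k i : ℕ, k < i → stirling2 k i = 0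
  | 0, 0, h => by omega
  | 0, _ + 1, _ => rfl
  | _ + 1, 0, h => by omega
  | k + 1, i + 1, h => by
    show stirling2 k i + (i + 1) * stirling2 k (i + 1) = 0
    rw [stirling2_eq_zero k i (by omega), stirling2_eq_zero k (i + 1) (by omega)]
    ring

lemma stirling2_pos : ∀ k i : ℕ, 1 ≤ i → i ≤ k → 0 < stirling2 k i
  | 0, _, h1, h2 => by omega
  | k + 1, i + 1, h1, h2 => by
    show 0 < stirling2 k i + (i + 1) * stirling2 k (i + 1)
    rcases Nat.eq_zero_or_pos i with hi | hi
    · subst hi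
      rcases Nat.eq_zero_or_pos k with hk | hk
      · subst hk; decide
      · have := stirling2_pos k 1 le_rfl hk
        positivity
    · have := stirling2_pos k i hi (by omega)
      positivity

/-- Klarner's inequality. -/
lemma klarner : ∀ k j : ℕ,
    (j + 2) * (stirling2 k j * stirling2 k (j + 2)) ≤ (j + 1) * stirling2 k (j + 1) ^ 2
  | 0, j => by
    rw [stirling2_eq_zero 0 (j + 2) (by omega)]
    simp
  | k + 1, 0 => by
    show 2 * (0 * _) ≤ _
    simp
  | k + 1, j + 1 => by
    -- middle index J = j + 2
    have h1 := klarner k j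
    have h2 := klarner k (j + 1)
    set a := stirling2 k j with ha
    set b := stirling2 k (j + 1) with hb
    set c := stirling2 k (j + 2) with hc
    set d := stirling2 k (j + 3) with hd
    show (j + 3) * ((a + (j + 1) * b) * (c + (j + 3) * d))
        ≤ (j + 2) * (b + (j + 2) * c) ^ 2
    rcases Nat.eq_zero_or_pos b with hb0 | hbpos
    · -- b = 0 ⇒ j + 1 > k ⇒ c = d = 0
      have hk1 : k < j + 1 := by
        by_contra h
        exact absurd (stirling2_pos k (j + 1) (by omega) (by omega)) (by omega)
      have hc0 : c = 0 := stirling2_eq_zero k (j + 2) (by omega)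
      have hd0 : d = 0 := stirling2_eq_zero k (j + 3) (by omega)
      rw [hb0, hc0, hd0]; simp
    rcases Nat.eq_zero_or_pos c with hc0 | hcpos
    · -- c = 0 ⇒ d = 0
      have hk2 : k < j + 2 := by
        by_contra h
        exact absurd (stirling2_pos k (j + 2) (by omega) (by omega)) hc0.not_gt
      have hd0 : d = 0 := stirling2_eq_zero k (j + 3) (by omega)
      rw [hc0, hd0]
      simp
    -- main case: b > 0, c > 0
    -- h1 : (j+2) * (a*c) ≤ (j+1) * b^2
    -- h2 : (j+3) * (b*d) ≤ (j+2) * c^2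
    have h3 : (j + 3) * (a * d) ≤ (j + 1) * (b * c) := by
      have key : ((j + 3) * (a * d)) * ((j + 2) * (b * c))
          ≤ ((j + 1) * (b * c)) * ((j + 2) * (b * c)) := by
        calc ((j + 3) * (a * d)) * ((j + 2) * (b * c))
            = ((j + 2) * (a * c)) * ((j + 3) * (b * d)) := by ring
          _ ≤ ((j + 1) * b ^ 2) * ((j + 2) * c ^ 2) := Nat.mul_le_mul h1 h2
          _ = ((j + 1) * (b * c)) * ((j + 2) * (b * c)) := by ring
      exact Nat.le_of_mul_le_mul_right key (by positivity)
    have c1 : (j + 3) * (j + 1) ≤ (j + 2) * (j + 2) := by nlinarith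
    have c2 : (j + 1) * (j + 2) * (j + 3) ≤ (j + 2) * (j + 2) * (j + 2) := by nlinarith
    have c3 : (j + 1) * (j + 2) * (j + 2) * (j + 3)
        ≤ (j + 2) * (j + 2) * (j + 2) * (j + 2) := by
      calc (j + 1) * (j + 2) * (j + 2) * (j + 3)
          = ((j + 3) * (j + 1)) * ((j + 2) * (j + 2)) := by ring
        _ ≤ ((j + 2) * (j + 2)) * ((j + 2) * (j + 2)) := Nat.mul_le_mul_right _ c1
        _ = (j + 2) * (j + 2) * (j + 2) * (j + 2) := by ring
    have key : (j + 2) * ((j + 3) * ((a + (j + 1) * b) * (c + (j + 3) * d)))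
        ≤ (j + 2) * ((j + 2) * (b + (j + 2) * c) ^ 2) := by
      calc (j + 2) * ((j + 3) * ((a + (j + 1) * b) * (c + (j + 3) * d)))
          = (j + 3) * ((j + 2) * (a * c)) + ((j + 2) * (j + 3)) * ((j + 3) * (a * d))
            + ((j + 1) * (j + 2) * (j + 3)) * (b * c)
            + ((j + 1) * (j + 2) * (j + 3)) * ((j + 3) * (b * d)) := by ring
        _ ≤ (j + 3) * ((j + 1) * b ^ 2) + ((j + 2) * (j + 3)) * ((j + 1) * (b * c))
            + ((j + 1) * (j + 2) * (j + 3)) * (b * c)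
            + ((j + 1) * (j + 2) * (j + 3)) * ((j + 2) * c ^ 2) := by
            exact Nat.add_le_add (Nat.add_le_add (Nat.add_le_add
              (Nat.mul_le_mul_left _ h1) (Nat.mul_le_mul_left _ h3)) le_rfl)
              (Nat.mul_le_mul_left _ h2)
        _ = ((j + 3) * (j + 1)) * b ^ 2 + (2 * ((j + 1) * (j + 2) * (j + 3))) * (b * c)
            + ((j + 1) * (j + 2) * (j + 2) * (j + 3)) * c ^ 2 := by ring
        _ ≤ ((j + 2) * (j + 2)) * b ^ 2 + (2 * ((j + 2) * (j + 2) * (j + 2))) * (b * c)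
            + ((j + 2) * (j + 2) * (j + 2) * (j + 2)) * c ^ 2 := by
            exact Nat.add_le_add (Nat.add_le_add
              (Nat.mul_le_mul_right _ c1)
              (Nat.mul_le_mul_right _ (by omega : 2 * ((j + 1) * (j + 2) * (j + 3)) ≤ 2 * ((j + 2) * (j + 2) * (j + 2)))))
              (Nat.mul_le_mul_right _ c3)
        _ = (j + 2) * ((j + 2) * (b + (j + 2) * c) ^ 2) := by ring
    exact Nat.le_of_mul_le_mul_left key (by omega)

lemma stirling2_log_concave (k j : ℕ) (hj : 1 ≤ j) :
    stirling2 k (j - 1) * stirling2 k (j + 1) ≤ stirling2 k j ^ 2 := by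
  obtain ⟨m, rfl⟩ : ∃ m, j = m + 1 := ⟨j - 1, by omega⟩
  have h := klarner k m
  simp only [Nat.add_sub_cancel]
  have h' : (m + 1) * (stirling2 k m * stirling2 k (m + 2))
      ≤ (m + 1) * stirling2 k (m + 1) ^ 2 := le_trans (by nlinarith) h
  exact Nat.le_of_mul_le_mul_left h' (by omega)

lemma descFactorial_log_concave (n j : ℕ) (hj : 1 ≤ j) :
    n.descFactorial (j - 1) * n.descFactorial (j + 1) ≤ n.descFactorial j ^ 2 := by
  obtain ⟨m, rfl⟩ : ∃ m, j = m + 1 := ⟨j - 1, by omega⟩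
  simp only [Nat.add_sub_cancel]
  rw [show m + 1 + 1 = m + 2 from rfl, Nat.descFactorial_succ (k := m + 1),
    Nat.descFactorial_succ (k := m)]
  have : n - (m + 1) ≤ n - m := by omega
  calc n.descFactorial m * ((n - (m + 1)) * ((n - m) * n.descFactorial m))
      ≤ n.descFactorial m * ((n - m) * ((n - m) * n.descFactorial m)) := by
        exact Nat.mul_le_mul_left _ (Nat.mul_le_mul_right _ this)
    _ = ((n - m) * n.descFactorial m) ^ 2 := by ring

/-- Log-concavity of j ↦ S(k,j)·(n)_j for 2 ≤ j ≤ min(k,n) - 1. -/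
theorem stmt10 (k n j : ℕ) (hk : 1 ≤ k) (hn : 1 ≤ n) (hj2 : 2 ≤ j)
    (hj : j ≤ min k n - 1) :
    stirling2 k (j - 1) * n.descFactorial (j - 1) *
        (stirling2 k (j + 1) * n.descFactorial (j + 1))
      ≤ (stirling2 k j * n.descFactorial j) ^ 2 := by
  have h1 := stirling2_log_concave k j (by omega)
  have h2 := descFactorial_log_concave n j (by omega)
  calc stirling2 k (j - 1) * n.descFactorial (j - 1) *
        (stirling2 k (j + 1) * n.descFactorial (j + 1))
      = (stirling2 k (j - 1) * stirling2 k (j + 1)) *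
        (n.descFactorial (j - 1) * n.descFactorial (j + 1)) := by ring
    _ ≤ stirling2 k j ^ 2 * n.descFactorial j ^ 2 := Nat.mul_le_mul h1 h2
    _ = (stirling2 k j * n.descFactorial j) ^ 2 := by ring
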